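/- arXiv:2004.14494 — 2 statements merged into one kernel-verified Lean document; each statement's English description precedes it below -/
import Mathlib

section
/- Let d, N ≥ 1 and let W : (ℝ^d)^N → ℝ be the quadratic social welfare function W(u) = c₀ + ⟨b, u⟩ + (1/2) uᵀ M u. Suppose there are constants 0 < μ ≤ L such that every diagonal block satisfies −L·I ⪯ M_{nn} ⪯ −μ·I (in the positive-semidefinite order), and there is ε ≥ 0 with ‖M_{nm}‖₂ ≤ ε for all n ≠ m, where ε < μ²/(N·L). Define the simultaneous fictitious-play update u^t by u^t_n = u^{t−1}_n − M_{nn}^{−1} g_n(u^{t−1}) for every n = 1,…,N. Then for every t ≥ 1, W(u^t) ≥ W(u^{t−1}) + (1/2)(1/L − εN/μ²) · Σ_{n=1}^N ‖g_n(u^{t−1})‖², so the sequence (W(u^t))_{t≥0} is nondecreasing; moreover M is negative definite, W is bounded above, and (W(u^t))_{t≥0} converges. -/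
/-!
With `g = ∇W(u)` and the best-response displacement `δₙ = -Mₙₙ⁻¹ gₙ`, expanding the quadratic
gives `W(u + δ) = W(u) + ½ Σₙ ⟪δₙ, gₙ⟫ + ½ Σ_{n ≠ m} ⟪δₙ, Mₙₘ δₘ⟫`, because `Mₙₙ δₙ = -gₙ`.
The bounds `μ ⪯ -Mₙₙ ⪯ L` give `⟪δₙ, gₙ⟫ ≥ ‖gₙ‖² / L` and `‖δₙ‖ ≤ ‖gₙ‖ / μ`, while the coupling
term is at most `εN Σₙ ‖δₙ‖²` in absolute value. The same coupling estimate yields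
`uᵀMu ≤ -(μ - εN) ‖u‖²` with `εN < μ`, so `M` is negative definite, `W` is bounded above, and the
monotone welfare sequence converges.
-/

open Matrix RealInnerProductSpace BigOperators Filter

namespace Matrix

variable {n : Type*} [Fintype n]

theorem PosSemidef.inner_toEuclideanLin_self_nonneg [DecidableEq n] {A : Matrix n n ℝ}
    (hA : A.PosSemidef) (x : EuclideanSpace ℝ n) : 0 ≤ ⟪x, A.toEuclideanLin x⟫ :=
  (isPositive_toEuclideanLin_iff.mpr hA).inner_nonneg_right x

theorem inner_toEuclideanLin_le_of_posSemidef_sub [DecidableEq n] {A B : Matrix n n ℝ}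
    (h : (B - A).PosSemidef) (x : EuclideanSpace ℝ n) :
    ⟪x, A.toEuclideanLin x⟫ ≤ ⟪x, B.toEuclideanLin x⟫ := by
  have := h.inner_toEuclideanLin_self_nonneg x
  rwa [map_sub, LinearMap.sub_apply, inner_sub_right, sub_nonneg] at this

theorem inner_toEuclideanLin_smul_one [DecidableEq n] (c : ℝ) (x : EuclideanSpace ℝ n) :
    ⟪x, (c • (1 : Matrix n n ℝ)).toEuclideanLin x⟫ = c * ‖x‖ ^ 2 := by
  simp [real_inner_smul_right]

theorem inner_toEuclideanLin_eq_inner_transpose {m : Type*} [Fintype m] [DecidableEq m]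
    [DecidableEq n] (A : Matrix m n ℝ) (x : EuclideanSpace ℝ m) (y : EuclideanSpace ℝ n) :
    ⟪x, A.toEuclideanLin y⟫ = ⟪Aᵀ.toEuclideanLin x, y⟫ := by
  rw [← conjTranspose_eq_transpose_of_trivial, toEuclideanLin_conjTranspose_eq_adjoint,
    LinearMap.adjoint_inner_left]

theorem abs_inner_toEuclideanLin_le [DecidableEq n] (A : Matrix n n ℝ)
    (x y : EuclideanSpace ℝ n) :
    |⟪x, A.toEuclideanLin y⟫| ≤ ‖toEuclideanCLM (𝕜 := ℝ) A‖ * (‖x‖ * ‖y‖) := by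
  calc |⟪x, A.toEuclideanLin y⟫| ≤ ‖x‖ * ‖toEuclideanCLM (𝕜 := ℝ) A y‖ :=
        abs_real_inner_le_norm _ _
    _ ≤ ‖x‖ * (‖toEuclideanCLM (𝕜 := ℝ) A‖ * ‖y‖) := by
        gcongr; exact ContinuousLinearMap.le_opNorm _ _
    _ = ‖toEuclideanCLM (𝕜 := ℝ) A‖ * (‖x‖ * ‖y‖) := by ring

theorem PosSemidef.smul_sub_mul_self [DecidableEq n] {P : Matrix n n ℝ} {L : ℝ}
    (hP : P.PosSemidef) (hPL : (L • 1 - P).PosSemidef) : (L • P - P * P).PosSemidef := by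
  open scoped MatrixOrder in
  obtain ⟨S, hS, rfl⟩ : ∃ S : Matrix n n ℝ, Sᴴ = S ∧ S * S = P :=
    ⟨CFC.sqrt P, (CFC.sqrt_nonneg P).posSemidef.1, CFC.sqrt_mul_sqrt_self P hP.nonneg⟩
  have h := hPL.conjTranspose_mul_mul_same S
  rwa [hS, show S * (L • 1 - S * S) * S = L • (S * S) - S * S * (S * S) by
    rw [mul_sub, sub_mul, mul_smul_comm, mul_one, smul_mul_assoc, mul_assoc, mul_assoc,
      mul_assoc]] at h

theorem PosSemidef.norm_toEuclideanLin_sq_le [DecidableEq n] {P : Matrix n n ℝ} {L : ℝ}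
    (hP : P.PosSemidef) (hPL : (L • 1 - P).PosSemidef) (x : EuclideanSpace ℝ n) :
    ‖P.toEuclideanLin x‖ ^ 2 ≤ L * ⟪x, P.toEuclideanLin x⟫ := by
  have h := (hP.smul_sub_mul_self hPL).inner_toEuclideanLin_self_nonneg x
  have hPP : ⟪x, (P * P).toEuclideanLin x⟫ = ‖P.toEuclideanLin x‖ ^ 2 := by
    rw [toLpLin_mul_same, LinearMap.comp_apply, inner_toEuclideanLin_eq_inner_transpose,
      ← conjTranspose_eq_transpose_of_trivial, hP.1, real_inner_self_eq_norm_sq]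
  rw [map_sub, LinearMap.sub_apply, inner_sub_right, map_smul, LinearMap.smul_apply,
    real_inner_smul_right, hPP, sub_nonneg] at h
  exact h

theorem mul_norm_sq_le_inner_toEuclideanLin [DecidableEq n] {P : Matrix n n ℝ} {μ : ℝ}
    (hP : (P - μ • 1).PosSemidef) (x : EuclideanSpace ℝ n) :
    μ * ‖x‖ ^ 2 ≤ ⟪x, P.toEuclideanLin x⟫ :=
  inner_toEuclideanLin_smul_one μ x ▸ inner_toEuclideanLin_le_of_posSemidef_sub hP x

theorem mul_norm_le_norm_toEuclideanLin [DecidableEq n] {P : Matrix n n ℝ} {μ : ℝ}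
    (hP : (P - μ • 1).PosSemidef) (x : EuclideanSpace ℝ n) :
    μ * ‖x‖ ≤ ‖P.toEuclideanLin x‖ := by
  rcases (norm_nonneg x).eq_or_lt with hx | hx
  · simp [← hx]
  refine le_of_mul_le_mul_right ?_ hx
  calc μ * ‖x‖ * ‖x‖ = μ * ‖x‖ ^ 2 := by ring
    _ ≤ ⟪x, P.toEuclideanLin x⟫ := mul_norm_sq_le_inner_toEuclideanLin hP x
    _ ≤ ‖x‖ * ‖P.toEuclideanLin x‖ := real_inner_le_norm _ _
    _ = ‖P.toEuclideanLin x‖ * ‖x‖ := mul_comm _ _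

theorem toEuclideanLin_toEuclideanLin_nonsing_inv [DecidableEq n] {A : Matrix n n ℝ}
    (hA : IsUnit A.det) (x : EuclideanSpace ℝ n) :
    A.toEuclideanLin (A⁻¹.toEuclideanLin x) = x := by
  rw [← LinearMap.comp_apply, ← toLpLin_mul_same, mul_nonsing_inv A hA, toLpLin_one,
    LinearMap.id_apply]

theorem bestResponse_bounds [DecidableEq n] {A : Matrix n n ℝ} {μ L : ℝ} (hμ : 0 < μ)
    (hlower : (A + L • 1).PosSemidef) (hupper : (-(μ • 1) - A).PosSemidef)
    (g : EuclideanSpace ℝ n) :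
    A.toEuclideanLin (-A⁻¹.toEuclideanLin g) = -g ∧
      ‖g‖ ^ 2 ≤ L * ⟪-A⁻¹.toEuclideanLin g, g⟫ ∧ μ * ‖-A⁻¹.toEuclideanLin g‖ ≤ ‖g‖ := by
  have hμP : (-A - μ • 1).PosSemidef := by rwa [sub_eq_neg_add, ← sub_eq_add_neg]
  have hPL : (L • 1 - -A).PosSemidef := by rwa [sub_neg_eq_add, add_comm]
  have hP : (-A).PosDef := by
    simpa using PosDef.posSemidef_add hμP (PosDef.one.smul hμ)
  have hAg : A.toEuclideanLin (-A⁻¹.toEuclideanLin g) = -g := by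
    rw [map_neg, toEuclideanLin_toEuclideanLin_nonsing_inv]
    exact (isUnit_iff_isUnit_det A).mp ((IsUnit.neg_iff A).mp hP.isUnit)
  have hPg : (-A).toEuclideanLin (-A⁻¹.toEuclideanLin g) = g := by
    rw [map_neg toEuclideanLin A, LinearMap.neg_apply, hAg, neg_neg]
  refine ⟨hAg, ?_, ?_⟩
  · have h := hP.posSemidef.norm_toEuclideanLin_sq_le hPL (-A⁻¹.toEuclideanLin g)
    rwa [hPg] at h
  · have h := mul_norm_le_norm_toEuclideanLin hμP (-A⁻¹.toEuclideanLin g)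
    rwa [hPg] at h

end Matrix

namespace FictitiousPlay

variable {ι n : Type*} [Fintype ι] [Fintype n] [DecidableEq n]

noncomputable def blockForm (M : ι → ι → Matrix n n ℝ) (v w : ι → EuclideanSpace ℝ n) : ℝ :=
  ∑ i, ∑ j, ⟪v i, (M i j).toEuclideanLin (w j)⟫

variable {M : ι → ι → Matrix n n ℝ}

theorem blockForm_add_left (v v' w : ι → EuclideanSpace ℝ n) :
    blockForm M (v + v') w = blockForm M v w + blockForm M v' w := by
  simp only [blockForm, Pi.add_apply, inner_add_left, Finset.sum_add_distrib]

theorem blockForm_add_right (v w w' : ι → EuclideanSpace ℝ n) :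
    blockForm M v (w + w') = blockForm M v w + blockForm M v w' := by
  simp only [blockForm, Pi.add_apply, map_add, inner_add_right, Finset.sum_add_distrib]

theorem blockForm_comm (hsymm : ∀ i j, (M i j)ᵀ = M j i) (v w : ι → EuclideanSpace ℝ n) :
    blockForm M v w = blockForm M w v := by
  rw [blockForm, blockForm, Finset.sum_comm]
  refine Finset.sum_congr rfl fun j _ => Finset.sum_congr rfl fun i _ => ?_
  rw [inner_toEuclideanLin_eq_inner_transpose, hsymm, real_inner_comm]

theorem abs_blockForm_sub_sum_diag_le [DecidableEq ι] {ε : ℝ} (hε : 0 ≤ ε)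
    (hoff : ∀ i j, i ≠ j → ‖toEuclideanCLM (𝕜 := ℝ) (M i j)‖ ≤ ε)
    (v : ι → EuclideanSpace ℝ n) :
    |blockForm M v v - ∑ i, ⟪v i, (M i i).toEuclideanLin (v i)⟫|
      ≤ ε * Fintype.card ι * ∑ i, ‖v i‖ ^ 2 := by
  have hsplit : blockForm M v v - ∑ i, ⟪v i, (M i i).toEuclideanLin (v i)⟫
      = ∑ i, ∑ j, if i = j then 0 else ⟪v i, (M i j).toEuclideanLin (v j)⟫ := by
    simp only [blockForm, ← Finset.sum_sub_distrib]
    refine Finset.sum_congr rfl fun i _ => ?_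
    simp only [Finset.sum_ite, Finset.sum_const_zero, zero_add, ← ne_eq, Finset.filter_ne,
      Finset.sum_erase_eq_sub (Finset.mem_univ i)]
  calc _ = |∑ i, ∑ j, if i = j then 0 else ⟪v i, (M i j).toEuclideanLin (v j)⟫| := by
        rw [hsplit]
    _ ≤ ∑ i, ∑ j, ε * (‖v i‖ * ‖v j‖) := by
        refine (Finset.abs_sum_le_sum_abs _ _).trans (Finset.sum_le_sum fun i _ => ?_)
        refine (Finset.abs_sum_le_sum_abs _ _).trans (Finset.sum_le_sum fun j _ => ?_)
        split_ifs with hij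
        · simp only [abs_zero]; positivity
        · exact (abs_inner_toEuclideanLin_le _ _ _).trans (by gcongr; exact hoff i j hij)
    _ = ε * (∑ i, ‖v i‖) ^ 2 := by
        rw [sq, Finset.sum_mul_sum, Finset.mul_sum]
        simp_rw [Finset.mul_sum]
    _ ≤ ε * (Fintype.card ι * ∑ i, ‖v i‖ ^ 2) := by
        gcongr; exact sq_sum_le_card_mul_sum_sq
    _ = ε * Fintype.card ι * ∑ i, ‖v i‖ ^ 2 := by ring

theorem blockForm_self_le [DecidableEq ι] {μ ε : ℝ} (hε : 0 ≤ ε)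
    (hoff : ∀ i j, i ≠ j → ‖toEuclideanCLM (𝕜 := ℝ) (M i j)‖ ≤ ε)
    (hupper : ∀ i, (-(μ • 1) - M i i).PosSemidef) (v : ι → EuclideanSpace ℝ n) :
    blockForm M v v ≤ (ε * Fintype.card ι - μ) * ∑ i, ‖v i‖ ^ 2 := by
  have hdiag : ∑ i, ⟪v i, (M i i).toEuclideanLin (v i)⟫ ≤ ∑ i, -μ * ‖v i‖ ^ 2 :=
    Finset.sum_le_sum fun i _ => by
      have h := inner_toEuclideanLin_le_of_posSemidef_sub (hupper i) (v i)
      rwa [← neg_smul, inner_toEuclideanLin_smul_one] at h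
  have hoffdiag := (abs_le.mp (abs_blockForm_sub_sum_diag_le hε hoff v)).2
  rw [← Finset.mul_sum] at hdiag
  linarith

noncomputable def quadWelfare (c₀ : ℝ) (b : ι → EuclideanSpace ℝ n) (M : ι → ι → Matrix n n ℝ)
    (u : ι → EuclideanSpace ℝ n) : ℝ :=
  c₀ + ∑ i, ⟪b i, u i⟫ + 1 / 2 * blockForm M u u

noncomputable def quadGrad (b : ι → EuclideanSpace ℝ n) (M : ι → ι → Matrix n n ℝ)
    (u : ι → EuclideanSpace ℝ n) (i : ι) : EuclideanSpace ℝ n :=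
  b i + ∑ j, (M i j).toEuclideanLin (u j)

noncomputable def fictitiousStep (b : ι → EuclideanSpace ℝ n) (M : ι → ι → Matrix n n ℝ)
    (u : ι → EuclideanSpace ℝ n) (i : ι) : EuclideanSpace ℝ n :=
  u i - (M i i)⁻¹.toEuclideanLin (quadGrad b M u i)

variable {c₀ : ℝ} {b : ι → EuclideanSpace ℝ n}

theorem sum_inner_quadGrad (u δ : ι → EuclideanSpace ℝ n) :
    ∑ i, ⟪δ i, quadGrad b M u i⟫ = ∑ i, ⟪b i, δ i⟫ + blockForm M δ u := by
  simp only [quadGrad, blockForm, inner_add_right, inner_sum, Finset.sum_add_distrib,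
    real_inner_comm (b _)]

theorem quadWelfare_add (hsymm : ∀ i j, (M i j)ᵀ = M j i) (u δ : ι → EuclideanSpace ℝ n) :
    quadWelfare c₀ b M (u + δ)
      = quadWelfare c₀ b M u + ∑ i, ⟪δ i, quadGrad b M u i⟫ + 1 / 2 * blockForm M δ δ := by
  simp only [quadWelfare, sum_inner_quadGrad, blockForm_add_left, blockForm_add_right,
    blockForm_comm hsymm u δ, Pi.add_apply, inner_add_right, Finset.sum_add_distrib]
  ring

theorem quadWelfare_le {κ : ℝ} (hκ : 0 < κ)
    (hM : ∀ v, blockForm M v v ≤ -κ * ∑ i, ‖v i‖ ^ 2) (u : ι → EuclideanSpace ℝ n) :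
    quadWelfare c₀ b M u ≤ c₀ + ∑ i, ‖b i‖ ^ 2 / (2 * κ) := by
  have hblock : ∀ i, ⟪b i, u i⟫ - κ / 2 * ‖u i‖ ^ 2 ≤ ‖b i‖ ^ 2 / (2 * κ) := fun i => by
    rw [le_div_iff₀ (by positivity)]
    nlinarith [real_inner_le_norm (b i) (u i), sq_nonneg (κ * ‖u i‖ - ‖b i‖)]
  have hsum := Finset.sum_le_sum fun i (_ : i ∈ Finset.univ) => hblock i
  rw [Finset.sum_sub_distrib, ← Finset.mul_sum] at hsum
  have := hM u
  unfold quadWelfare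
  linarith

theorem le_quadWelfare_fictitiousStep [DecidableEq ι] {μ L ε : ℝ}
    (hsymm : ∀ i j, (M i j)ᵀ = M j i) (hμ : 0 < μ) (hL : 0 < L) (hε : 0 ≤ ε)
    (hlower : ∀ i, (M i i + L • 1).PosSemidef) (hupper : ∀ i, (-(μ • 1) - M i i).PosSemidef)
    (hoff : ∀ i j, i ≠ j → ‖toEuclideanCLM (𝕜 := ℝ) (M i j)‖ ≤ ε)
    (u : ι → EuclideanSpace ℝ n) :
    quadWelfare c₀ b M u + 1 / 2 * (1 / L - ε * Fintype.card ι / μ ^ 2) *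
        ∑ i, ‖quadGrad b M u i‖ ^ 2 ≤ quadWelfare c₀ b M (fictitiousStep b M u) := by
  set g := quadGrad b M u
  set δ : ι → EuclideanSpace ℝ n := fun i => -(M i i)⁻¹.toEuclideanLin (g i)
  have hstep : fictitiousStep b M u = u + δ := funext fun i => sub_eq_add_neg _ _
  have hbr := fun i => bestResponse_bounds hμ (hlower i) (hupper i) (g i)
  have hdiag : ∑ i, ⟪δ i, (M i i).toEuclideanLin (δ i)⟫ = -∑ i, ⟪δ i, g i⟫ := by
    simp only [δ, (hbr _).1, inner_neg_right, Finset.sum_neg_distrib]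
  have hgain : 1 / L * ∑ i, ‖g i‖ ^ 2 ≤ ∑ i, ⟪δ i, g i⟫ := by
    rw [Finset.mul_sum]
    refine Finset.sum_le_sum fun i _ => ?_
    rw [div_mul_eq_mul_div, one_mul, div_le_iff₀' hL]
    exact (hbr i).2.1
  have hδ : μ ^ 2 * ∑ i, ‖δ i‖ ^ 2 ≤ ∑ i, ‖g i‖ ^ 2 := by
    rw [Finset.mul_sum]
    refine Finset.sum_le_sum fun i _ => ?_
    rw [← mul_pow]
    exact pow_le_pow_left₀ (by positivity) (hbr i).2.2 2
  have hoffdiag := (abs_le.mp (abs_blockForm_sub_sum_diag_le hε hoff δ)).1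
  have hloss : ε * Fintype.card ι * ∑ i, ‖δ i‖ ^ 2
      ≤ ε * Fintype.card ι / μ ^ 2 * ∑ i, ‖g i‖ ^ 2 := by
    rw [div_mul_eq_mul_div, le_div_iff₀ (by positivity)]
    nlinarith [mul_le_mul_of_nonneg_left hδ (by positivity : 0 ≤ ε * Fintype.card ι)]
  rw [hstep, quadWelfare_add hsymm]
  linarith

theorem dotProduct_of_blocks_mulVec (x : ι × n → ℝ) :
    x ⬝ᵥ ((of fun p q : ι × n => M p.1 q.1 p.2 q.2) *ᵥ x)
      = blockForm M (fun i => WithLp.toLp 2 (Function.curry x i))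
          (fun i => WithLp.toLp 2 (Function.curry x i)) := by
  simp only [blockForm, dotProduct, mulVec, Fintype.sum_prod_type, of_apply, toLpLin_apply,
    EuclideanSpace.inner_eq_star_dotProduct, Finset.mul_sum, Finset.sum_mul, Function.curry_apply,
    star_trivial]
  refine Finset.sum_congr rfl fun i _ => Finset.sum_comm.trans <|
    Finset.sum_congr rfl fun j _ => Finset.sum_congr rfl fun k _ =>
      Finset.sum_congr rfl fun l _ => by ring

theorem posDef_neg_of_blocks {κ : ℝ} (hsymm : ∀ i j, (M i j)ᵀ = M j i) (hκ : 0 < κ)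
    (hM : ∀ v, blockForm M v v ≤ -κ * ∑ i, ‖v i‖ ^ 2) :
    (-(of fun p q : ι × n => M p.1 q.1 p.2 q.2)).PosDef := by
  rw [posDef_iff_dotProduct_mulVec]
  refine ⟨?_, fun x hx => ?_⟩
  · ext ⟨i, k⟩ ⟨j, l⟩
    simp [← hsymm i j]
  set X : ι → EuclideanSpace ℝ n := fun i => WithLp.toLp 2 (Function.curry x i)
  have hX : 0 < ∑ i, ‖X i‖ ^ 2 := by
    obtain ⟨⟨i, k⟩, hik⟩ := Function.ne_iff.mp hx
    have hXi : X i ≠ 0 := fun h => hik (by simpa [X] using congrArg (· k) h)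
    exact Finset.sum_pos' (fun _ _ => by positivity) ⟨i, Finset.mem_univ _, by positivity⟩
  rw [star_trivial, neg_mulVec, dotProduct_neg, dotProduct_of_blocks_mulVec]
  nlinarith [hM X, mul_pos hκ hX]

end FictitiousPlay

open FictitiousPlay

theorem simultaneous_fictitious_play_convergence_general {d N : ℕ}
    (M : Fin N → Fin N → Matrix (Fin d) (Fin d) ℝ)
    (hsymm : ∀ n m, (M n m)ᵀ = M m n)
    (μ L ε : ℝ) (hμ : 0 < μ) (hμL : μ ≤ L) (hε : 0 ≤ ε)
    (hεsmall : ε < μ ^ 2 / (N * L))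
    (hlower : ∀ n, (M n n + L • (1 : Matrix (Fin d) (Fin d) ℝ)).PosSemidef)
    (hupper : ∀ n, (-(μ • (1 : Matrix (Fin d) (Fin d) ℝ)) - M n n).PosSemidef)
    (hoff : ∀ n m, n ≠ m → ‖toEuclideanCLM (𝕜 := ℝ) (M n m)‖ ≤ ε)
    (b : Fin N → EuclideanSpace ℝ (Fin d)) (c₀ : ℝ)
    (W : (Fin N → EuclideanSpace ℝ (Fin d)) → ℝ)
    (hW : ∀ u, W u = c₀ + (∑ n, ⟪b n, u n⟫) +
      (1 / 2) * ∑ n, ∑ m, ⟪u n, (M n m).toEuclideanLin (u m)⟫)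
    (g : (Fin N → EuclideanSpace ℝ (Fin d)) → Fin N → EuclideanSpace ℝ (Fin d))
    (hg : ∀ u n, g u n = b n + ∑ m, (M n m).toEuclideanLin (u m))
    (u : ℕ → Fin N → EuclideanSpace ℝ (Fin d))
    (hiter : ∀ t n, u (t + 1) n = u t n - (M n n)⁻¹.toEuclideanLin (g (u t) n)) :
    (∀ t : ℕ,
      W (u t) + (1 / 2) * (1 / L - ε * N / μ ^ 2) * ∑ n, ‖g (u t) n‖ ^ 2 ≤ W (u (t + 1))) ∧
    Monotone (fun t => W (u t)) ∧
    (-(Matrix.of fun p q : Fin N × Fin d => M p.1 q.1 p.2 q.2)).PosDef ∧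
    BddAbove (Set.range W) ∧
    ∃ l : ℝ, Tendsto (fun t => W (u t)) atTop (nhds l) := by
  have hL : 0 < L := hμ.trans_le hμL
  have hεNL : ε * N * L < μ ^ 2 := by
    rcases N.eq_zero_or_pos with rfl | hN
    · simpa using pow_pos hμ 2
    · rw [mul_assoc]; exact (lt_div_iff₀ (by positivity)).mp hεsmall
  have hεN : ε * N < μ := by
    nlinarith [mul_le_mul_of_nonneg_left hμL (mul_nonneg hε N.cast_nonneg)]
  have hrate : 0 ≤ 1 / L - ε * N / μ ^ 2 := by
    rw [sub_nonneg, div_le_div_iff₀ (by positivity) hL]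
    linarith
  obtain rfl : W = quadWelfare c₀ b M := funext hW
  obtain rfl : g = quadGrad b M := funext fun v => funext (hg v)
  have hstep (t : ℕ) : quadWelfare c₀ b M (u t) + 1 / 2 * (1 / L - ε * N / μ ^ 2) *
      ∑ n, ‖quadGrad b M (u t) n‖ ^ 2 ≤ quadWelfare c₀ b M (u (t + 1)) := by
    have hu : u (t + 1) = fictitiousStep b M (u t) := funext (hiter t)
    simpa only [hu, Fintype.card_fin] using
      le_quadWelfare_fictitiousStep hsymm hμ hL hε hlower hupper hoff (u t)
  have hmono : Monotone fun t => quadWelfare c₀ b M (u t) :=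
    monotone_nat_of_le_succ fun t => (le_add_of_nonneg_right (by positivity)).trans (hstep t)
  have hM (v : Fin N → EuclideanSpace ℝ (Fin d)) :
      blockForm M v v ≤ -(μ - ε * N) * ∑ n, ‖v n‖ ^ 2 := by
    simpa using blockForm_self_le hε hoff hupper v
  have hbdd : BddAbove (Set.range (quadWelfare c₀ b M)) :=
    ⟨_, Set.forall_mem_range.2 (quadWelfare_le (sub_pos.2 hεN) hM)⟩
  exact ⟨hstep, hmono, posDef_neg_of_blocks hsymm (sub_pos.2 hεN) hM, hbdd, _,
    tendsto_atTop_ciSup hmono (hbdd.mono (Set.range_subset_iff.2 fun t => Set.mem_range_self _))⟩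

/-- Convergence of simultaneous full-step fictitious play for a quadratic social welfare
`W(u) = c₀ + ⟨b, u⟩ + (1/2)uᵀMu` on `(ℝ^d)^N`, where `M` is a symmetric block matrix with
`d×d` blocks `M n m` and `g u n = b n + Σ_m M n m (u m)` is the `n`-th block of `∇W(u)`.
Assume `−L·I ⪯ M_nn ⪯ −μ·I` with `0 < μ ≤ L`, the off-diagonal spectral norms are at most
`ε ≥ 0` with `ε < μ²/(N·L)`, and the update is `u^{t+1}_n = u^t_n − M_nn⁻¹ g_n(u^t)`. Then
each step improves the welfare by at least `(1/2)(1/L − εN/μ²)Σ_n‖g_n(u^t)‖²`, the welfare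
sequence is nondecreasing, `M` is negative definite, `W` is bounded above, and `W(u^t)`
converges. -/
theorem simultaneous_fictitious_play_convergence {d N : ℕ} (hd : 1 ≤ d) (hN : 1 ≤ N)
    (M : Fin N → Fin N → Matrix (Fin d) (Fin d) ℝ)
    (hsymm : ∀ n m, (M n m)ᵀ = M m n)
    (μ L ε : ℝ) (hμ : 0 < μ) (hμL : μ ≤ L) (hε : 0 ≤ ε)
    (hεsmall : ε < μ ^ 2 / (N * L))
    (hlower : ∀ n, (M n n + L • (1 : Matrix (Fin d) (Fin d) ℝ)).PosSemidef)
    (hupper : ∀ n, (-(μ • (1 : Matrix (Fin d) (Fin d) ℝ)) - M n n).PosSemidef)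
    (hoff : ∀ n m, n ≠ m → ‖toEuclideanCLM (𝕜 := ℝ) (M n m)‖ ≤ ε)
    (b : Fin N → EuclideanSpace ℝ (Fin d)) (c₀ : ℝ)
    (W : (Fin N → EuclideanSpace ℝ (Fin d)) → ℝ)
    (hW : ∀ u, W u = c₀ + (∑ n, ⟪b n, u n⟫) +
      (1 / 2) * ∑ n, ∑ m, ⟪u n, (M n m).toEuclideanLin (u m)⟫)
    (g : (Fin N → EuclideanSpace ℝ (Fin d)) → Fin N → EuclideanSpace ℝ (Fin d))
    (hg : ∀ u n, g u n = b n + ∑ m, (M n m).toEuclideanLin (u m))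
    (u : ℕ → Fin N → EuclideanSpace ℝ (Fin d))
    (hiter : ∀ t n, u (t + 1) n = u t n - (M n n)⁻¹.toEuclideanLin (g (u t) n)) :
    (∀ t : ℕ,
      W (u t) + (1 / 2) * (1 / L - ε * N / μ ^ 2) * ∑ n, ‖g (u t) n‖ ^ 2 ≤ W (u (t + 1))) ∧
    Monotone (fun t => W (u t)) ∧
    (-(Matrix.of fun p q : Fin N × Fin d => M p.1 q.1 p.2 q.2)).PosDef ∧
    BddAbove (Set.range W) ∧
    ∃ l : ℝ, Tendsto (fun t => W (u t)) atTop (nhds l) :=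
  simultaneous_fictitious_play_convergence_general M hsymm μ L ε hμ hμL hε hεsmall hlower hupper
    hoff b c₀ W hW g hg u hiter
end

section
/- Let d, N ≥ 1 and let W : (ℝ^d)^N → ℝ be the quadratic function W(u) = c₀ + ⟨b, u⟩ + (1/2) uᵀ M u with every diagonal block M_{nn} negative definite. Fix n and let u' be obtained from u by updating only block n via u'_n = u_n − M_{nn}^{−1} g_n(u) and u'_m = u_m for m ≠ n. Then W(u') − W(u) = −(1/2) g_n(u)ᵀ M_{nn}^{−1} g_n(u) ≥ 0. Consequently, along any round-robin (sequential) fictitious-play trajectory u^t in which at each step exactly one block is updated by this rule, the sequence (W(u^t))_{t≥0} is nondecreasing, and if M is negative definite it converges. -/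
open Matrix RealInnerProductSpace BigOperators Filter

/-!
Moving only block `n` of `u` by `δ` changes `W` by `⟪g_n(u), δ⟫ + ½⟪δ, M_nn δ⟫`; the symmetry
`M_nmᵀ = M_mn` makes the two cross terms of the quadratic part equal. For the Newton step `δ = -y`
with `M_nn y = g_n(u)` this is `-½⟪g_n(u), y⟫ = -½⟪M_nn y, y⟫ ≥ 0`, as `-M_nn` is positive
definite. Hence `W` increases along every round-robin trajectory. If the whole block matrix `M` is
negative definite, then in the flattened coordinates `W` is a concave quadratic, bounded above by
completing the square, so the monotone sequence `W(u^t)` converges.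
-/

section BlockQuadratic

variable {ι E : Type*} [Fintype ι] [NormedAddCommGroup E] [InnerProductSpace ℝ E]

noncomputable def blockQuadratic (c₀ : ℝ) (b : ι → E) (A : ι → ι → E →ₗ[ℝ] E) (v : ι → E) : ℝ :=
  c₀ + ∑ n, ⟪b n, v n⟫ + 1 / 2 * ∑ n, ∑ m, ⟪v n, A n m (v m)⟫

def blockGradient (b : ι → E) (A : ι → ι → E →ₗ[ℝ] E) (v : ι → E) (n : ι) : E :=
  b n + ∑ m, A n m (v m)

variable [DecidableEq ι]

theorem sum_apply_piSingle {M β : Type*} [AddCommMonoid M] [Zero β] (f : ι → β → M)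
    (hf : ∀ i, f i 0 = 0) (n : ι) (x : β) :
    ∑ i, f i (Pi.single (M := fun _ => β) n x i) = f n x := by
  simp only [Pi.apply_single f hf, Fintype.sum_pi_single']

theorem blockQuadratic_add_single (c₀ : ℝ) (b : ι → E) {A : ι → ι → E →ₗ[ℝ] E}
    (hA : ∀ n m x y, ⟪A n m x, y⟫ = ⟪x, A m n y⟫) (u : ι → E) (n : ι) (δ : E) :
    blockQuadratic c₀ b A (u + Pi.single n δ) =
      blockQuadratic c₀ b A u + ⟪blockGradient b A u n, δ⟫ + 1 / 2 * ⟪δ, A n n δ⟫ := by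
  set s : ι → E := Pi.single n δ
  have hlin : ∑ m, ⟪b m, s m⟫ = ⟪b n, δ⟫ := sum_apply_piSingle (fun m y => ⟪b m, y⟫) (by simp) n δ
  have hleft : ∑ i, ∑ j, ⟪s i, A i j (u j)⟫ = ⟪∑ j, A n j (u j), δ⟫ := by
    rw [sum_apply_piSingle (fun i y => ∑ j, ⟪y, A i j (u j)⟫) (by simp) n δ, ← inner_sum,
      real_inner_comm]
  have hright : ∑ i, ∑ j, ⟪u i, A i j (s j)⟫ = ⟪∑ j, A n j (u j), δ⟫ := by
    calc ∑ i, ∑ j, ⟪u i, A i j (s j)⟫ = ∑ i, ⟪u i, A i n δ⟫ :=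
          Finset.sum_congr rfl fun i _ =>
            sum_apply_piSingle (fun j y => ⟪u i, A i j y⟫) (by simp) n δ
      _ = ⟪∑ j, A n j (u j), δ⟫ := by simp only [sum_inner, hA]
  have hdiag : ∑ i, ∑ j, ⟪s i, A i j (s j)⟫ = ⟪δ, A n n δ⟫ := by
    rw [sum_apply_piSingle (fun i y => ∑ j, ⟪y, A i j (s j)⟫) (by simp) n δ,
      sum_apply_piSingle (fun j y => ⟪δ, A n j y⟫) (by simp) n δ]
  simp only [blockQuadratic, blockGradient, Pi.add_apply, map_add, inner_add_left, inner_add_right,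
    Finset.sum_add_distrib, hlin, hleft, hright, hdiag]
  ring

theorem blockQuadratic_sub_of_newton_update (c₀ : ℝ) (b : ι → E) {A : ι → ι → E →ₗ[ℝ] E}
    (hA : ∀ n m x y, ⟪A n m x, y⟫ = ⟪x, A m n y⟫) {n : ι} {B : E → E} (hB : ∀ x, A n n (B x) = x)
    {u u' : ι → E} (hu'n : u' n = u n - B (blockGradient b A u n))
    (hu'm : ∀ m, m ≠ n → u' m = u m) :
    blockQuadratic c₀ b A u' - blockQuadratic c₀ b A u =
      -(1 / 2) * ⟪blockGradient b A u n, B (blockGradient b A u n)⟫ := by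
  set g := blockGradient b A u n
  have hu' : u' = u + Pi.single n (-B g) := by
    funext m
    by_cases hm : m = n
    · subst hm; simp [hu'n, sub_eq_add_neg]
    · simp [hu'm m hm, hm]
  rw [hu', blockQuadratic_add_single c₀ b hA, map_neg, hB, inner_neg_left, inner_neg_right,
    inner_neg_right, real_inner_comm (B g)]
  ring

end BlockQuadratic

section MatrixToEuclideanLin

variable {κ : Type*} [Fintype κ] [DecidableEq κ]

theorem Matrix.inner_transpose_toEuclideanLin {m : Type*} [Fintype m] [DecidableEq m]
    (A : Matrix m κ ℝ) (x : EuclideanSpace ℝ m) (y : EuclideanSpace ℝ κ) :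
    ⟪Aᵀ.toEuclideanLin x, y⟫ = ⟪x, A.toEuclideanLin y⟫ := by
  rw [← conjTranspose_eq_transpose_of_trivial, toEuclideanLin_conjTranspose_eq_adjoint,
    LinearMap.adjoint_inner_left]

theorem Matrix.toEuclideanLin_apply_inv {A : Matrix κ κ ℝ} (hA : IsUnit A)
    (x : EuclideanSpace ℝ κ) : A.toEuclideanLin (A⁻¹.toEuclideanLin x) = x := by
  rw [← LinearMap.comp_apply, ← toLpLin_mul_same,
    mul_nonsing_inv _ ((isUnit_iff_isUnit_det A).1 hA), toLpLin_one, LinearMap.id_apply]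

theorem Matrix.isUnit_of_posDef_neg {A : Matrix κ κ ℝ} (hA : (-A).PosDef) : IsUnit A := by
  simpa using hA.isUnit.neg

theorem Matrix.inner_inv_toEuclideanLin_nonpos {A : Matrix κ κ ℝ} (hA : (-A).PosDef)
    (x : EuclideanSpace ℝ κ) : ⟪x, A⁻¹.toEuclideanLin x⟫ ≤ 0 := by
  set y := A⁻¹.toEuclideanLin x
  have hx : A.toEuclideanLin y = x := toEuclideanLin_apply_inv (isUnit_of_posDef_neg hA) x
  have hpos := (isPositive_toEuclideanLin_iff.2 hA.posSemidef).inner_nonneg_left y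
  rw [← hx]
  simpa [inner_neg_left] using hpos

theorem Matrix.PosDef.dotProduct_sub_half_mulVec_le {P : Matrix κ κ ℝ} (hP : P.PosDef)
    (β x : κ → ℝ) : β ⬝ᵥ x - 1 / 2 * (x ⬝ᵥ P *ᵥ x) ≤ 1 / 2 * (β ⬝ᵥ P⁻¹ *ᵥ β) := by
  set w := P⁻¹ *ᵥ β
  have hPw : P *ᵥ w = β := by
    rw [mulVec_mulVec, mul_nonsing_inv _ ((isUnit_iff_isUnit_det P).1 hP.isUnit), one_mulVec]
  have hwPx : w ⬝ᵥ P *ᵥ x = β ⬝ᵥ x := by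
    rw [dotProduct_mulVec, ← mulVec_transpose, (isHermitian_iff_isSymm.1 hP.isHermitian).eq, hPw]
  have hsq : 0 ≤ (x - w) ⬝ᵥ P *ᵥ (x - w) := by
    simpa using hP.posSemidef.dotProduct_mulVec_nonneg (x - w)
  rw [mulVec_sub, sub_dotProduct, dotProduct_sub, dotProduct_sub, hPw, hwPx,
    dotProduct_comm x β] at hsq
  rw [dotProduct_comm β w]
  linarith

end MatrixToEuclideanLin

section BlockMatrix

variable {ι κ : Type*} [Fintype ι] [Fintype κ] [DecidableEq κ]

theorem blockQuadratic_toEuclideanLin_eq (c₀ : ℝ) (b : ι → EuclideanSpace ℝ κ)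
    (M : ι → ι → Matrix κ κ ℝ) (v : ι → EuclideanSpace ℝ κ) :
    blockQuadratic c₀ b (fun n m => (M n m).toEuclideanLin) v =
      c₀ + (fun p : ι × κ => b p.1 p.2) ⬝ᵥ (fun p => v p.1 p.2) +
        1 / 2 * ((fun p : ι × κ => v p.1 p.2) ⬝ᵥ comp ι ι κ κ ℝ M *ᵥ fun p => v p.1 p.2) := by
  have hlin : ∑ n, ⟪b n, v n⟫ = (fun p : ι × κ => b p.1 p.2) ⬝ᵥ fun p => v p.1 p.2 := by
    simp [dotProduct, Fintype.sum_prod_type, PiLp.inner_apply, mul_comm]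
  have hquad : ∑ n, ∑ m, ⟪v n, (M n m).toEuclideanLin (v m)⟫ =
      (fun p : ι × κ => v p.1 p.2) ⬝ᵥ comp ι ι κ κ ℝ M *ᵥ fun p => v p.1 p.2 := by
    simp only [PiLp.inner_apply, ofLp_toLpLin, toLin'_apply, dotProduct, mulVec,
      Fintype.sum_prod_type, Finset.mul_sum, Finset.sum_mul, RCLike.inner_apply, conj_trivial]
    exact Finset.sum_congr rfl fun n _ => Finset.sum_comm.trans <| Finset.sum_congr rfl
      fun m _ => Finset.sum_congr rfl fun i _ => Finset.sum_congr rfl fun j _ => mul_comm _ _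
  rw [blockQuadratic, hlin, hquad]

variable [DecidableEq ι]

theorem blockQuadratic_toEuclideanLin_newton_update (c₀ : ℝ)
    (b : ι → EuclideanSpace ℝ κ) {M : ι → ι → Matrix κ κ ℝ} (hsymm : ∀ n m, (M n m)ᵀ = M m n)
    {n : ι} (hn : (-M n n).PosDef) {u u' : ι → EuclideanSpace ℝ κ}
    (hu'n : u' n = u n -
      (M n n)⁻¹.toEuclideanLin (blockGradient b (fun i j => (M i j).toEuclideanLin) u n))
    (hu'm : ∀ m, m ≠ n → u' m = u m) :
    blockQuadratic c₀ b (fun i j => (M i j).toEuclideanLin) u' -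
        blockQuadratic c₀ b (fun i j => (M i j).toEuclideanLin) u =
      -(1 / 2) * ⟪blockGradient b (fun i j => (M i j).toEuclideanLin) u n,
        (M n n)⁻¹.toEuclideanLin (blockGradient b (fun i j => (M i j).toEuclideanLin) u n)⟫ ∧
    0 ≤ blockQuadratic c₀ b (fun i j => (M i j).toEuclideanLin) u' -
        blockQuadratic c₀ b (fun i j => (M i j).toEuclideanLin) u := by
  have hA : ∀ i j x y, ⟪(M i j).toEuclideanLin x, y⟫ = ⟪x, (M j i).toEuclideanLin y⟫ :=
    fun i j x y => by rw [← inner_transpose_toEuclideanLin, hsymm]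
  have hgain := blockQuadratic_sub_of_newton_update c₀ b hA
    (toEuclideanLin_apply_inv (isUnit_of_posDef_neg hn)) hu'n hu'm
  refine ⟨hgain, ?_⟩
  rw [hgain]
  linarith [inner_inv_toEuclideanLin_nonpos hn
    (blockGradient b (fun i j => (M i j).toEuclideanLin) u n)]

theorem bddAbove_range_blockQuadratic_toEuclideanLin (c₀ : ℝ) (b : ι → EuclideanSpace ℝ κ)
    {M : ι → ι → Matrix κ κ ℝ} (hM : (-comp ι ι κ κ ℝ M).PosDef) :
    BddAbove (Set.range (blockQuadratic c₀ b fun n m => (M n m).toEuclideanLin)) := by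
  set β : ι × κ → ℝ := fun p => b p.1 p.2
  refine ⟨c₀ + 1 / 2 * (β ⬝ᵥ (-comp ι ι κ κ ℝ M)⁻¹ *ᵥ β), Set.forall_mem_range.2 fun v => ?_⟩
  have hbound := hM.dotProduct_sub_half_mulVec_le β fun p => v p.1 p.2
  rw [neg_mulVec, dotProduct_neg] at hbound
  rw [blockQuadratic_toEuclideanLin_eq]
  linarith

end BlockMatrix

theorem round_robin_fictitious_play_general {d N : ℕ}
    (M : Fin N → Fin N → Matrix (Fin d) (Fin d) ℝ)
    (hsymm : ∀ n m, (M n m)ᵀ = M m n)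
    (hdiag : ∀ n, (-(M n n)).PosDef)
    (b : Fin N → EuclideanSpace ℝ (Fin d)) (c₀ : ℝ)
    (W : (Fin N → EuclideanSpace ℝ (Fin d)) → ℝ)
    (hW : ∀ v, W v = c₀ + (∑ n, ⟪b n, v n⟫) +
      (1 / 2) * ∑ n, ∑ m, ⟪v n, (M n m).toEuclideanLin (v m)⟫)
    (g : (Fin N → EuclideanSpace ℝ (Fin d)) → Fin N → EuclideanSpace ℝ (Fin d))
    (hg : ∀ v n, g v n = b n + ∑ m, (M n m).toEuclideanLin (v m)) :
    (∀ (n : Fin N) (u u' : Fin N → EuclideanSpace ℝ (Fin d)),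
      u' n = u n - (M n n)⁻¹.toEuclideanLin (g u n) →
      (∀ m, m ≠ n → u' m = u m) →
      W u' - W u = -(1 / 2) * ⟪g u n, (M n n)⁻¹.toEuclideanLin (g u n)⟫ ∧
        0 ≤ W u' - W u) ∧
    ∀ u : ℕ → Fin N → EuclideanSpace ℝ (Fin d),
      (∀ t, ∃ n : Fin N,
        u (t + 1) n = u t n - (M n n)⁻¹.toEuclideanLin (g (u t) n) ∧
        ∀ m, m ≠ n → u (t + 1) m = u t m) →
      Monotone (fun t => W (u t)) ∧
      ((-(Matrix.of fun p q : Fin N × Fin d => M p.1 q.1 p.2 q.2)).PosDef →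
        ∃ l : ℝ, Tendsto (fun t => W (u t)) atTop (nhds l)) := by
  obtain rfl : W = blockQuadratic c₀ b fun n m => (M n m).toEuclideanLin := funext hW
  obtain rfl : g = blockGradient b fun n m => (M n m).toEuclideanLin :=
    funext fun v => funext (hg v)
  refine ⟨fun n u u' => blockQuadratic_toEuclideanLin_newton_update c₀ b hsymm (hdiag n),
    fun u hu => ?_⟩
  have mono : Monotone fun t => blockQuadratic c₀ b _ (u t) := monotone_nat_of_le_succ fun t => by
    obtain ⟨n, hu'n, hu'm⟩ := hu t
    linarith [(blockQuadratic_toEuclideanLin_newton_update c₀ b hsymm (hdiag n) hu'n hu'm).2]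
  exact ⟨mono, fun hM => ⟨_, tendsto_atTop_ciSup mono
    ((bddAbove_range_blockQuadratic_toEuclideanLin c₀ b hM).mono
      (Set.range_subset_iff.2 fun t => Set.mem_range_self (u t)))⟩⟩

/-- Sequential (round-robin) fictitious play for a quadratic social welfare
`W(u) = c₀ + ⟨b, u⟩ + (1/2)uᵀMu` on `(ℝ^d)^N`, where `M` is a symmetric block matrix with
negative definite diagonal blocks and `g u n = b n + Σ_m M n m (u m)` is the `n`-th block
of `∇W(u)`. Updating only block `n` via `u'_n = u_n − M_nn⁻¹ g_n(u)` yields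
`W(u') − W(u) = −(1/2)⟨g_n(u), M_nn⁻¹ g_n(u)⟩ ≥ 0`; consequently, along any trajectory in
which at each step exactly one block is so updated, `W(u^t)` is nondecreasing, and if `M`
is negative definite it converges. -/
theorem round_robin_fictitious_play {d N : ℕ} (hd : 1 ≤ d) (hN : 1 ≤ N)
    (M : Fin N → Fin N → Matrix (Fin d) (Fin d) ℝ)
    (hsymm : ∀ n m, (M n m)ᵀ = M m n)
    (hdiag : ∀ n, (-(M n n)).PosDef)
    (b : Fin N → EuclideanSpace ℝ (Fin d)) (c₀ : ℝ)
    (W : (Fin N → EuclideanSpace ℝ (Fin d)) → ℝ)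
    (hW : ∀ v, W v = c₀ + (∑ n, ⟪b n, v n⟫) +
      (1 / 2) * ∑ n, ∑ m, ⟪v n, (M n m).toEuclideanLin (v m)⟫)
    (g : (Fin N → EuclideanSpace ℝ (Fin d)) → Fin N → EuclideanSpace ℝ (Fin d))
    (hg : ∀ v n, g v n = b n + ∑ m, (M n m).toEuclideanLin (v m)) :
    (∀ (n : Fin N) (u u' : Fin N → EuclideanSpace ℝ (Fin d)),
      u' n = u n - (M n n)⁻¹.toEuclideanLin (g u n) →
      (∀ m, m ≠ n → u' m = u m) →
      W u' - W u = -(1 / 2) * ⟪g u n, (M n n)⁻¹.toEuclideanLin (g u n)⟫ ∧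
        0 ≤ W u' - W u) ∧
    ∀ u : ℕ → Fin N → EuclideanSpace ℝ (Fin d),
      (∀ t, ∃ n : Fin N,
        u (t + 1) n = u t n - (M n n)⁻¹.toEuclideanLin (g (u t) n) ∧
        ∀ m, m ≠ n → u (t + 1) m = u t m) →
      Monotone (fun t => W (u t)) ∧
      ((-(Matrix.of fun p q : Fin N × Fin d => M p.1 q.1 p.2 q.2)).PosDef →
        ∃ l : ℝ, Tendsto (fun t => W (u t)) atTop (nhds l)) :=
  round_robin_fictitious_play_general M hsymm hdiag b c₀ W hW g hg
end
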